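/- arXiv:2501.16663 — 5 statements merged into one kernel-verified Lean document; each statement's English description precedes it below -/
import Mathlib

section
/- Let S be a finite state space, γ ∈ [0,1) a discount factor, μ a probability mass function on S (the initial state distribution), and T^π, T'^π : S → (S → ℝ) two stochastic kernels (for each s, T^π(·|s) is a probability mass function on S). Define the γ-discounted state distributions d and d' recursively by d(s) = (1-γ)μ(s) + γ ∑_{s'} d(s') T^π(s|s') and similarly d' with T'^π. Then ∑_{s} |d'(s) - d(s)| ≤ (γ/(1-γ)) ∑_{s'} d'(s') ∑_{s} |T'^π(s|s') - T^π(s|s')|. -/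
/-- Lemma 1 (finite-state): the l1 distance between the γ-discounted state
distributions of two kernels is bounded by γ/(1-γ) times the d'-expected l1
kernel distance. Here `T s' s` denotes `T(s | s')`. -/
theorem discounted_distribution_perturbation
    (S : Type*) [Fintype S]
    (γ : ℝ) (hγ0 : 0 ≤ γ) (hγ1 : γ < 1)
    (μ : S → ℝ) (hμ0 : ∀ s, 0 ≤ μ s) (hμ1 : ∑ s, μ s = 1)
    (T T' : S → S → ℝ)
    (hT0 : ∀ s' s, 0 ≤ T s' s) (hT1 : ∀ s', ∑ s, T s' s = 1)
    (hT'0 : ∀ s' s, 0 ≤ T' s' s) (hT'1 : ∀ s', ∑ s, T' s' s = 1)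
    (d d' : S → ℝ)
    (hd0 : ∀ s, 0 ≤ d s) (hd1 : ∑ s, d s = 1)
    (hd'0 : ∀ s, 0 ≤ d' s) (hd'1 : ∑ s, d' s = 1)
    (hd : ∀ s, d s = (1 - γ) * μ s + γ * ∑ s', d s' * T s' s)
    (hd' : ∀ s, d' s = (1 - γ) * μ s + γ * ∑ s', d' s' * T' s' s) :
    ∑ s, |d' s - d s| ≤
      γ / (1 - γ) * ∑ s', d' s' * ∑ s, |T' s' s - T s' s| := by
  set Δ := ∑ s, |d' s - d s| with hΔ
  set E := ∑ s', d' s' * ∑ s, |T' s' s - T s' s| with hE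
  have h1γ : (0:ℝ) < 1 - γ := by linarith
  have key : Δ ≤ γ * (Δ + E) := by
    have step : ∀ s, |d' s - d s| ≤
        γ * ((∑ s', |d' s' - d s'| * T s' s) + ∑ s', d' s' * |T' s' s - T s' s|) := by
      intro s
      have hds : d' s - d s =
          γ * ((∑ s', (d' s' - d s') * T s' s) + ∑ s', d' s' * (T' s' s - T s' s)) := by
        have expand : (∑ s', (d' s' - d s') * T s' s) + ∑ s', d' s' * (T' s' s - T s' s)
            = (∑ s', d' s' * T' s' s) - ∑ s', d s' * T s' s := by
          rw [← Finset.sum_add_distrib, ← Finset.sum_sub_distrib]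
          exact Finset.sum_congr rfl fun s' _ => by ring
        rw [hd s, hd' s, expand]; ring
      rw [hds, abs_mul, abs_of_nonneg hγ0]
      gcongr
      calc |(∑ s', (d' s' - d s') * T s' s) + ∑ s', d' s' * (T' s' s - T s' s)|
          ≤ |∑ s', (d' s' - d s') * T s' s| + |∑ s', d' s' * (T' s' s - T s' s)| :=
            abs_add_le _ _
        _ ≤ (∑ s', |(d' s' - d s') * T s' s|) + ∑ s', |d' s' * (T' s' s - T s' s)| := by
            gcongr <;> exact Finset.abs_sum_le_sum_abs _ _
        _ = (∑ s', |d' s' - d s'| * T s' s) + ∑ s', d' s' * |T' s' s - T s' s| := by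
            congr 1 <;> refine Finset.sum_congr rfl fun s' _ => ?_
            · rw [abs_mul, abs_of_nonneg (hT0 s' s)]
            · rw [abs_mul, abs_of_nonneg (hd'0 s')]
    calc Δ ≤ ∑ s, γ * ((∑ s', |d' s' - d s'| * T s' s) + ∑ s', d' s' * |T' s' s - T s' s|) :=
          Finset.sum_le_sum fun s _ => step s
      _ = γ * ((∑ s, ∑ s', |d' s' - d s'| * T s' s) +
            ∑ s, ∑ s', d' s' * |T' s' s - T s' s|) := by
          rw [← Finset.mul_sum, Finset.sum_add_distrib]
      _ = γ * (Δ + E) := by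
          rw [Finset.sum_comm, Finset.sum_comm (f := fun s s' => d' s' * |T' s' s - T s' s|)]
          congr 2
          · simp [← Finset.mul_sum, hT1, hΔ]
          · simp [← Finset.mul_sum, hE]
  rw [div_mul_eq_mul_div, le_div_iff₀ h1γ]
  nlinarith [key]
end

section
/- Let S be a finite nonempty state space, γ ∈ [0,1), μ an initial probability mass function, T^π and T'^π stochastic kernels on S, with γ-discounted state distributions d and d' satisfying the recursions d(s) = (1-γ)μ(s) + γ ∑_{s'} d(s') T^π(s|s') and d'(s) = (1-γ)μ(s) + γ ∑_{s'} d'(s') T'^π(s|s'). Let r̄ : S → ℝ be nonnegative and define J = (1/(1-γ)) ∑_s d(s) r̄(s), J' = (1/(1-γ)) ∑_s d'(s) r̄(s). Then J' - J ≤ (γ/(1-γ)²) · (∑_{s'} d'(s') ∑_{s} |T'^π(s|s') - T^π(s|s')|) · max_s r̄(s). -/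
/-- Theorem 1 (finite-state): the difference of cumulative rewards between two
transition kernels is bounded by γ/(1-γ)² times the d'-expected l1 kernel
distance times the maximum expected reward. `T s' s` denotes `T(s | s')`. -/
theorem cumulative_reward_perturbation
    (S : Type*) [Fintype S] [Nonempty S]
    (γ : ℝ) (hγ0 : 0 ≤ γ) (hγ1 : γ < 1)
    (μ : S → ℝ) (hμ0 : ∀ s, 0 ≤ μ s) (hμ1 : ∑ s, μ s = 1)
    (T T' : S → S → ℝ)
    (hT0 : ∀ s' s, 0 ≤ T s' s) (hT1 : ∀ s', ∑ s, T s' s = 1)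
    (hT'0 : ∀ s' s, 0 ≤ T' s' s) (hT'1 : ∀ s', ∑ s, T' s' s = 1)
    (d d' : S → ℝ)
    (hd0 : ∀ s, 0 ≤ d s) (hd1 : ∑ s, d s = 1)
    (hd'0 : ∀ s, 0 ≤ d' s) (hd'1 : ∑ s, d' s = 1)
    (hd : ∀ s, d s = (1 - γ) * μ s + γ * ∑ s', d s' * T s' s)
    (hd' : ∀ s, d' s = (1 - γ) * μ s + γ * ∑ s', d' s' * T' s' s)
    (rbar : S → ℝ) (hr0 : ∀ s, 0 ≤ rbar s) :
    (1 / (1 - γ)) * ∑ s, d' s * rbar s - (1 / (1 - γ)) * ∑ s, d s * rbar s ≤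
      γ / (1 - γ) ^ 2 * (∑ s', d' s' * ∑ s, |T' s' s - T s' s|) *
        (Finset.univ.sup' Finset.univ_nonempty rbar) := by
  have h1γ : (0:ℝ) < 1 - γ := by linarith
  set R := Finset.univ.sup' Finset.univ_nonempty rbar with hRdef
  set Δ := ∑ s, |d' s - d s| with hΔdef
  set ε := ∑ s', d' s' * ∑ s, |T' s' s - T s' s| with hεdef
  have hε0 : 0 ≤ ε := Finset.sum_nonneg fun s' _ =>
    mul_nonneg (hd'0 s') (Finset.sum_nonneg fun s _ => abs_nonneg _)
  have hR0 : 0 ≤ R :=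
    le_trans (hr0 (Classical.arbitrary S))
      (Finset.le_sup' rbar (Finset.mem_univ (Classical.arbitrary S)))
  have hrR : ∀ s, rbar s ≤ R := fun s => Finset.le_sup' rbar (Finset.mem_univ s)
  -- difference formula
  have hdiff : ∀ s, d' s - d s
      = γ * ∑ s', (d' s' * (T' s' s - T s' s) + (d' s' - d s') * T s' s) := by
    intro s
    have : ∑ s', (d' s' * (T' s' s - T s' s) + (d' s' - d s') * T s' s)
        = (∑ s', d' s' * T' s' s) - ∑ s', d s' * T s' s := by
      rw [← Finset.sum_sub_distrib]
      exact Finset.sum_congr rfl fun s' _ => by ring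
    rw [this, hd s, hd' s]; ring
  -- key L1 bound
  have key : Δ ≤ γ * (ε + Δ) := by
    have h1 : Δ ≤ ∑ s, γ * ∑ s', (d' s' * |T' s' s - T s' s| + |d' s' - d s'| * T s' s) := by
      apply Finset.sum_le_sum
      intro s _
      rw [hdiff s, abs_mul, abs_of_nonneg hγ0]
      apply mul_le_mul_of_nonneg_left _ hγ0
      calc |∑ s', (d' s' * (T' s' s - T s' s) + (d' s' - d s') * T s' s)|
          ≤ ∑ s', |d' s' * (T' s' s - T s' s) + (d' s' - d s') * T s' s| :=
            Finset.abs_sum_le_sum_abs _ _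
        _ ≤ ∑ s', (d' s' * |T' s' s - T s' s| + |d' s' - d s'| * T s' s) := by
            apply Finset.sum_le_sum
            intro s' _
            refine le_trans (abs_add_le _ _) (add_le_add ?_ ?_)
            · rw [abs_mul, abs_of_nonneg (hd'0 s')]
            · rw [abs_mul, abs_of_nonneg (hT0 s' s)]
    have h2 : ∑ s, γ * ∑ s', (d' s' * |T' s' s - T s' s| + |d' s' - d s'| * T s' s)
        = γ * (ε + Δ) := by
      rw [← Finset.mul_sum]
      congr 1
      rw [Finset.sum_comm]
      rw [hεdef, hΔdef, ← Finset.sum_add_distrib]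
      apply Finset.sum_congr rfl
      intro s' _
      rw [Finset.sum_add_distrib, ← Finset.mul_sum, ← Finset.mul_sum, hT1 s', mul_one]
    rw [← h2]; exact h1
  have hΔbound : Δ ≤ γ * ε / (1 - γ) := by
    rw [le_div_iff₀ h1γ]; nlinarith
  -- main bound
  have hmain : ∑ s, d' s * rbar s - ∑ s, d s * rbar s ≤ Δ * R := by
    rw [← Finset.sum_sub_distrib, hΔdef, Finset.sum_mul]
    apply Finset.sum_le_sum
    intro s _
    calc d' s * rbar s - d s * rbar s = (d' s - d s) * rbar s := by ring
      _ ≤ |d' s - d s| * rbar s := mul_le_mul_of_nonneg_right (le_abs_self _) (hr0 s)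
      _ ≤ |d' s - d s| * R := mul_le_mul_of_nonneg_left (hrR s) (abs_nonneg _)
  calc (1 / (1 - γ)) * ∑ s, d' s * rbar s - (1 / (1 - γ)) * ∑ s, d s * rbar s
      = (1 / (1 - γ)) * (∑ s, d' s * rbar s - ∑ s, d s * rbar s) := by ring
    _ ≤ (1 / (1 - γ)) * (Δ * R) := by
        apply mul_le_mul_of_nonneg_left hmain (by positivity)
    _ ≤ (1 / (1 - γ)) * ((γ * ε / (1 - γ)) * R) := by
        apply mul_le_mul_of_nonneg_left (mul_le_mul_of_nonneg_right hΔbound hR0)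
          (by positivity)
    _ = γ / (1 - γ) ^ 2 * ε * R := by field_simp
end

section
/- Let S be a finite state space, γ ∈ [0,1), μ an initial distribution, and T^π, T'^π stochastic kernels with discounted state distributions d, d'. Suppose max_{s'} ∑_s |T'^π(s|s') - T^π(s|s')| ≤ ε. Then ∑_s |d'(s) - d(s)| ≤ (γ/(1-γ)) ε. -/
/-- Uniform-kernel-perturbation corollary of Lemma 1: if every conditional
distribution of the two kernels differs by at most ε in l1, then the discounted
state distributions differ by at most γ/(1-γ)·ε in l1. -/
theorem discounted_distribution_uniform_perturbation
    (S : Type*) [Fintype S]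
    (γ : ℝ) (hγ0 : 0 ≤ γ) (hγ1 : γ < 1)
    (μ : S → ℝ) (hμ0 : ∀ s, 0 ≤ μ s) (hμ1 : ∑ s, μ s = 1)
    (T T' : S → S → ℝ)
    (hT0 : ∀ s' s, 0 ≤ T s' s) (hT1 : ∀ s', ∑ s, T s' s = 1)
    (hT'0 : ∀ s' s, 0 ≤ T' s' s) (hT'1 : ∀ s', ∑ s, T' s' s = 1)
    (d d' : S → ℝ)
    (hd0 : ∀ s, 0 ≤ d s) (hd1 : ∑ s, d s = 1)
    (hd'0 : ∀ s, 0 ≤ d' s) (hd'1 : ∑ s, d' s = 1)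
    (hd : ∀ s, d s = (1 - γ) * μ s + γ * ∑ s', d s' * T s' s)
    (hd' : ∀ s, d' s = (1 - γ) * μ s + γ * ∑ s', d' s' * T' s' s)
    (ε : ℝ) (hε : ∀ s', ∑ s, |T' s' s - T s' s| ≤ ε) :
    ∑ s, |d' s - d s| ≤ γ / (1 - γ) * ε := by
  set Δ : ℝ := ∑ s, |d' s - d s| with hΔ
  have h1γ : 0 < 1 - γ := by linarith
  have key : Δ ≤ γ * Δ + γ * ε := by
    have hpt : ∀ s, |d' s - d s| ≤
        γ * ((∑ s', |d' s' - d s'| * T' s' s) + ∑ s', d s' * |T' s' s - T s' s|) := by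
      intro s
      have e : (∑ s', (d' s' - d s') * T' s' s) + ∑ s', d s' * (T' s' s - T s' s)
          = (∑ s', d' s' * T' s' s) - ∑ s', d s' * T s' s := by
        rw [← Finset.sum_add_distrib, ← Finset.sum_sub_distrib]
        exact Finset.sum_congr rfl fun s' _ => by ring
      have heq : d' s - d s = γ * ((∑ s', (d' s' - d s') * T' s' s)
          + ∑ s', d s' * (T' s' s - T s' s)) := by
        rw [hd s, hd' s, e]; ring
      rw [heq, abs_mul, abs_of_nonneg hγ0]
      gcongr
      calc |(∑ s', (d' s' - d s') * T' s' s) + ∑ s', d s' * (T' s' s - T s' s)|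
          ≤ |∑ s', (d' s' - d s') * T' s' s| + |∑ s', d s' * (T' s' s - T s' s)| :=
            abs_add_le _ _
        _ ≤ (∑ s', |d' s' - d s'| * T' s' s) + ∑ s', d s' * |T' s' s - T s' s| := by
            gcongr
            · calc |∑ s', (d' s' - d s') * T' s' s| ≤ ∑ s', |(d' s' - d s') * T' s' s| :=
                Finset.abs_sum_le_sum_abs _ _
              _ = ∑ s', |d' s' - d s'| * T' s' s :=
                  Finset.sum_congr rfl fun s' _ => by
                    rw [abs_mul, abs_of_nonneg (hT'0 s' s)]
            · calc |∑ s', d s' * (T' s' s - T s' s)| ≤ ∑ s', |d s' * (T' s' s - T s' s)| :=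
                Finset.abs_sum_le_sum_abs _ _
              _ = ∑ s', d s' * |T' s' s - T s' s| :=
                  Finset.sum_congr rfl fun s' _ => by
                    rw [abs_mul, abs_of_nonneg (hd0 s')]
    have A : (∑ s, ∑ s', |d' s' - d s'| * T' s' s) = ∑ s', |d' s' - d s'| * ∑ s, T' s' s := by
      rw [Finset.sum_comm]; simp [Finset.mul_sum]
    have B : (∑ s, ∑ s', d s' * |T' s' s - T s' s|)
        = ∑ s', d s' * ∑ s, |T' s' s - T s' s| := by
      rw [Finset.sum_comm]; simp [Finset.mul_sum]
    have C : (∑ s', d s' * ∑ s, |T' s' s - T s' s|) ≤ ε := by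
      calc (∑ s', d s' * ∑ s, |T' s' s - T s' s|) ≤ ∑ s', d s' * ε :=
            Finset.sum_le_sum fun s' _ => mul_le_mul_of_nonneg_left (hε s') (hd0 s')
        _ = ε := by rw [← Finset.sum_mul, hd1, one_mul]
    calc Δ ≤ ∑ s, γ * ((∑ s', |d' s' - d s'| * T' s' s) + ∑ s', d s' * |T' s' s - T s' s|) :=
          Finset.sum_le_sum fun s _ => hpt s
      _ = γ * ((∑ s, ∑ s', |d' s' - d s'| * T' s' s)
            + ∑ s, ∑ s', d s' * |T' s' s - T s' s|) := by
          rw [← Finset.mul_sum, Finset.sum_add_distrib]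
      _ = γ * ((∑ s', |d' s' - d s'| * ∑ s, T' s' s)
            + ∑ s', d s' * ∑ s, |T' s' s - T s' s|) := by rw [A, B]
      _ ≤ γ * (Δ + ε) := by
          have hA : (∑ s', |d' s' - d s'| * ∑ s, T' s' s) = Δ := by simp [hT'1, hΔ]
          rw [hA]
          exact mul_le_mul_of_nonneg_left (by linarith [C]) hγ0
      _ = γ * Δ + γ * ε := by ring
  have h2 : (1 - γ) * Δ ≤ γ * ε := by nlinarith
  calc Δ = (1 - γ) * Δ / (1 - γ) := by field_simp
    _ ≤ γ * ε / (1 - γ) := by gcongr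
    _ = γ / (1 - γ) * ε := by ring
end

section
/- Let S be a finite nonempty state space, γ ∈ [0,1), μ an initial distribution, T^π and T'^π stochastic kernels with discounted distributions d, d', and let r̄ : S → ℝ satisfy 0 ≤ r̄(s) ≤ R for all s. Define J = (1/(1-γ)) ∑_s d(s) r̄(s) and similarly J'. If max_{s'} ∑_s |T'^π(s|s') - T^π(s|s')| ≤ ε, then |J' - J| ≤ (γ R ε)/(1-γ)². -/
/-- Symmetrized uniform version of Theorem 1: |J' - J| ≤ γRε/(1-γ)². -/
theorem cumulative_reward_uniform_perturbation
    (S : Type*) [Fintype S] [Nonempty S]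
    (γ : ℝ) (hγ0 : 0 ≤ γ) (hγ1 : γ < 1)
    (μ : S → ℝ) (hμ0 : ∀ s, 0 ≤ μ s) (hμ1 : ∑ s, μ s = 1)
    (T T' : S → S → ℝ)
    (hT0 : ∀ s' s, 0 ≤ T s' s) (hT1 : ∀ s', ∑ s, T s' s = 1)
    (hT'0 : ∀ s' s, 0 ≤ T' s' s) (hT'1 : ∀ s', ∑ s, T' s' s = 1)
    (d d' : S → ℝ)
    (hd0 : ∀ s, 0 ≤ d s) (hd1 : ∑ s, d s = 1)
    (hd'0 : ∀ s, 0 ≤ d' s) (hd'1 : ∑ s, d' s = 1)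
    (hd : ∀ s, d s = (1 - γ) * μ s + γ * ∑ s', d s' * T s' s)
    (hd' : ∀ s, d' s = (1 - γ) * μ s + γ * ∑ s', d' s' * T' s' s)
    (rbar : S → ℝ) (R : ℝ) (hr : ∀ s, 0 ≤ rbar s ∧ rbar s ≤ R)
    (ε : ℝ) (hε : ∀ s', ∑ s, |T' s' s - T s' s| ≤ ε) :
    |(1 / (1 - γ)) * ∑ s, d' s * rbar s - (1 / (1 - γ)) * ∑ s, d s * rbar s| ≤
      γ * R * ε / (1 - γ) ^ 2 := by
  have h1γ : (0:ℝ) < 1 - γ := by linarith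
  obtain ⟨s₀⟩ := ‹Nonempty S›
  have hR : 0 ≤ R := le_trans (hr s₀).1 (hr s₀).2
  have hε0 : 0 ≤ ε :=
    le_trans (Finset.sum_nonneg fun s _ => abs_nonneg _) (hε s₀)
  set Δ : ℝ := ∑ s, |d' s - d s| with hΔdef
  have hΔ0 : 0 ≤ Δ := Finset.sum_nonneg fun s _ => abs_nonneg _
  -- key recursion for differences
  have key : ∀ s, d' s - d s =
      γ * ∑ s', (d' s' * (T' s' s - T s' s) + (d' s' - d s') * T s' s) := by
    intro s
    rw [hd s, hd' s]
    have : ∑ s', (d' s' * (T' s' s - T s' s) + (d' s' - d s') * T s' s)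
        = ∑ s', (d' s' * T' s' s - d s' * T s' s) := by
      apply Finset.sum_congr rfl
      intro x _; ring
    rw [this, Finset.sum_sub_distrib]
    ring
  have hstep : Δ ≤ γ * (ε + Δ) := by
    have h1 : Δ ≤ γ * ∑ s, ∑ s',
        (d' s' * |T' s' s - T s' s| + |d' s' - d s'| * T s' s) := by
      rw [Finset.mul_sum]
      apply Finset.sum_le_sum
      intro s _
      rw [key s, abs_mul, abs_of_nonneg hγ0]
      apply mul_le_mul_of_nonneg_left _ hγ0
      calc |∑ s', (d' s' * (T' s' s - T s' s) + (d' s' - d s') * T s' s)|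
          ≤ ∑ s', |d' s' * (T' s' s - T s' s) + (d' s' - d s') * T s' s| :=
            Finset.abs_sum_le_sum_abs _ _
        _ ≤ ∑ s', (d' s' * |T' s' s - T s' s| + |d' s' - d s'| * T s' s) := by
            apply Finset.sum_le_sum
            intro x _
            calc |d' x * (T' x s - T x s) + (d' x - d x) * T x s|
                ≤ |d' x * (T' x s - T x s)| + |(d' x - d x) * T x s| :=
                  abs_add_le _ _
              _ = d' x * |T' x s - T x s| + |d' x - d x| * T x s := by
                  rw [abs_mul, abs_mul, abs_of_nonneg (hd'0 x),
                    abs_of_nonneg (hT0 x s)]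
    have h2 : ∑ s, ∑ s', (d' s' * |T' s' s - T s' s| + |d' s' - d s'| * T s' s)
        ≤ ε + Δ := by
      rw [Finset.sum_comm]
      have : ∀ s' : S, ∑ s, (d' s' * |T' s' s - T s' s| + |d' s' - d s'| * T s' s)
          = d' s' * (∑ s, |T' s' s - T s' s|) + |d' s' - d s'| * (∑ s, T s' s) := by
        intro s'
        rw [Finset.sum_add_distrib, Finset.mul_sum, Finset.mul_sum]
      calc ∑ s', ∑ s, (d' s' * |T' s' s - T s' s| + |d' s' - d s'| * T s' s)
          = ∑ s', (d' s' * (∑ s, |T' s' s - T s' s|) + |d' s' - d s'| * (∑ s, T s' s)) :=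
            Finset.sum_congr rfl fun s' _ => this s'
        _ ≤ ∑ s', (d' s' * ε + |d' s' - d s'| * 1) := by
            apply Finset.sum_le_sum
            intro s' _
            gcongr
            · exact hd'0 s'
            · exact hε s'
            · exact le_of_eq (hT1 s')
        _ = ε + Δ := by
            rw [Finset.sum_add_distrib, ← Finset.sum_mul, hd'1]
            simp [hΔdef, mul_comm]
      done
    calc Δ ≤ γ * ∑ s, ∑ s',
        (d' s' * |T' s' s - T s' s| + |d' s' - d s'| * T s' s) := h1
      _ ≤ γ * (ε + Δ) := mul_le_mul_of_nonneg_left h2 hγ0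
  have hΔbound : Δ ≤ γ * ε / (1 - γ) := by
    rw [le_div_iff₀ h1γ]
    nlinarith
  have habs : |∑ s, d' s * rbar s - ∑ s, d s * rbar s| ≤ R * Δ := by
    rw [← Finset.sum_sub_distrib]
    calc |∑ s, (d' s * rbar s - d s * rbar s)|
        ≤ ∑ s, |d' s * rbar s - d s * rbar s| := Finset.abs_sum_le_sum_abs _ _
      _ ≤ ∑ s, R * |d' s - d s| := by
          apply Finset.sum_le_sum
          intro s _
          have : d' s * rbar s - d s * rbar s = (d' s - d s) * rbar s := by ring
          rw [this, abs_mul, abs_of_nonneg (hr s).1, mul_comm]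
          exact mul_le_mul_of_nonneg_right (hr s).2 (abs_nonneg _)
      _ = R * Δ := by rw [← Finset.mul_sum]
  have hrw : (1 / (1 - γ)) * ∑ s, d' s * rbar s - (1 / (1 - γ)) * ∑ s, d s * rbar s
      = (1 / (1 - γ)) * (∑ s, d' s * rbar s - ∑ s, d s * rbar s) := by ring
  rw [hrw, abs_mul, abs_of_nonneg (by positivity : (0:ℝ) ≤ 1 / (1 - γ))]
  have : (1 / (1 - γ)) * |∑ s, d' s * rbar s - ∑ s, d s * rbar s|
      ≤ (1 / (1 - γ)) * (R * (γ * ε / (1 - γ))) := by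
    apply mul_le_mul_of_nonneg_left _ (by positivity)
    exact le_trans habs (mul_le_mul_of_nonneg_left hΔbound hR)
  calc (1 / (1 - γ)) * |∑ s, d' s * rbar s - ∑ s, d s * rbar s|
      ≤ (1 / (1 - γ)) * (R * (γ * ε / (1 - γ))) := this
    _ = γ * R * ε / (1 - γ) ^ 2 := by
        field_simp
end

section
/- Let S be a finite state space, γ ∈ [0,1), and d, d' the discounted distributions for stochastic kernels T, T' with common initial distribution μ. Then d' - d = γ (I - γ T'ᵀ)⁻¹ (T'ᵀ - Tᵀ) d, where I is the identity operator on ℝ^S and (I - γT'ᵀ)⁻¹ = ∑_{k=0}^{∞} γᵏ (T'ᵀ)ᵏ. -/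
section aux

variable {S : Type*} [Fintype S] [DecidableEq S]

private lemma iter_vecMul (T' : S → S → ℝ) (k : ℕ) (v : S → ℝ) :
    (fun v : S → ℝ => fun t => ∑ s', v s' * T' s' t)^[k] v
      = Matrix.vecMul v ((Matrix.of T') ^ k) := by
  induction k generalizing v with
  | zero => simp [Matrix.vecMul_one]
  | succ n ih =>
      rw [Function.iterate_succ_apply, ih]
      have h1 : (fun t => ∑ s', v s' * T' s' t) = Matrix.vecMul v (Matrix.of T') := by
        funext t
        simp [Matrix.vecMul, dotProduct]
      rw [h1, Matrix.vecMul_vecMul, ← pow_succ']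

private lemma pow_nonneg_entries (T' : S → S → ℝ) (h0 : ∀ i j, 0 ≤ T' i j) (k : ℕ) :
    ∀ i j, 0 ≤ ((Matrix.of T') ^ k) i j := by
  induction k with
  | zero => intro i j; simp [Matrix.one_apply]; split <;> norm_num
  | succ n ih =>
      intro i j
      rw [pow_succ, Matrix.mul_apply]
      exact Finset.sum_nonneg fun l _ => mul_nonneg (ih i l) (h0 l j)

private lemma pow_row_sum (T' : S → S → ℝ) (h1 : ∀ i, ∑ j, T' i j = 1) (k : ℕ) :
    ∀ i, ∑ j, ((Matrix.of T') ^ k) i j = 1 := by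
  induction k with
  | zero => intro i; simp [Matrix.one_apply]
  | succ n ih =>
      intro i
      simp only [pow_succ, Matrix.mul_apply]
      rw [Finset.sum_comm]
      calc ∑ l, ∑ j, ((Matrix.of T') ^ n) i l * T' l j
          = ∑ l, ((Matrix.of T') ^ n) i l * ∑ j, T' l j := by
            simp [Finset.mul_sum]
        _ = 1 := by simp [h1, ih i]

private lemma vecMul_abs_le (T' : S → S → ℝ) (h0 : ∀ i j, 0 ≤ T' i j)
    (h1 : ∀ i, ∑ j, T' i j = 1) (k : ℕ) (v : S → ℝ) (t : S) :
    |Matrix.vecMul v ((Matrix.of T') ^ k) t| ≤ ∑ i, |v i| := by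
  have hv : Matrix.vecMul v ((Matrix.of T') ^ k) t = ∑ i, v i * ((Matrix.of T') ^ k) i t := by
    simp [Matrix.vecMul, dotProduct]
  rw [hv]
  calc |∑ i, v i * ((Matrix.of T') ^ k) i t| ≤ ∑ i, |v i * ((Matrix.of T') ^ k) i t| :=
        Finset.abs_sum_le_sum_abs _ _
    _ ≤ ∑ i, |v i| := by
        apply Finset.sum_le_sum
        intro i _
        rw [abs_mul]
        have hk := pow_nonneg_entries T' h0 k i t
        have hle : ((Matrix.of T') ^ k) i t ≤ 1 := by
          have := pow_row_sum T' h1 k i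
          calc ((Matrix.of T') ^ k) i t ≤ ∑ j, ((Matrix.of T') ^ k) i j :=
                Finset.single_le_sum (fun j _ => pow_nonneg_entries T' h0 k i j) (Finset.mem_univ t)
            _ = 1 := this
        rw [abs_of_nonneg hk]
        nlinarith [abs_nonneg (v i)]

end aux

/-- Exact perturbation identity: d' - d = γ(I-γT'ᵀ)⁻¹(T'ᵀ-Tᵀ)d, with the
resolvent written as the Neumann series ∑_k γᵏ (T'ᵀ)ᵏ. Here the operator T'ᵀ
maps v to s ↦ ∑_{s'} v(s')T'(s|s'). -/
theorem discounted_distribution_perturbation_identity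
    (S : Type*) [Fintype S]
    (γ : ℝ) (hγ0 : 0 ≤ γ) (hγ1 : γ < 1)
    (μ : S → ℝ) (hμ0 : ∀ s, 0 ≤ μ s) (hμ1 : ∑ s, μ s = 1)
    (T T' : S → S → ℝ)
    (hT0 : ∀ s' s, 0 ≤ T s' s) (hT1 : ∀ s', ∑ s, T s' s = 1)
    (hT'0 : ∀ s' s, 0 ≤ T' s' s) (hT'1 : ∀ s', ∑ s, T' s' s = 1)
    (d d' : S → ℝ)
    (hd : ∀ s, d s = (1 - γ) * μ s + γ * ∑ s', d s' * T s' s)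
    (hd' : ∀ s, d' s = (1 - γ) * μ s + γ * ∑ s', d' s' * T' s' s) :
    ∀ s, d' s - d s =
      γ * ∑' k : ℕ, γ ^ k *
        ((fun v : S → ℝ => fun t => ∑ s', v s' * T' s' t)^[k]
          (fun t => ∑ s', d s' * (T' s' t - T s' t))) s := by
  classical
  set M : Matrix S S ℝ := Matrix.of T' with hM
  set e : S → ℝ := fun s => d' s - d s with he
  set b : S → ℝ := fun t => ∑ s', d s' * (T' s' t - T s' t) with hb
  -- recursion: e = γ • (e ᵥ* M) + γ • b
  have hrec : ∀ s, e s = γ * Matrix.vecMul e M s + γ * b s := by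
    intro s
    have hvm : Matrix.vecMul e M s = ∑ s', (d' s' - d s') * T' s' s := by
      simp [Matrix.vecMul, dotProduct, he, hM]
    rw [hvm]
    have h1 := hd s
    have h2 := hd' s
    simp only [he, hb]
    rw [h2, h1]
    rw [Finset.mul_sum, Finset.mul_sum, Finset.mul_sum]
    have hkey : ∑ i, γ * ((d' i - d i) * T' i s) + γ * ∑ s', d s' * (T' s' s - T s' s)
        = ∑ i, (γ * (d' i * T' i s) - γ * (d i * T i s)) := by
      rw [Finset.mul_sum, ← Finset.sum_add_distrib]
      refine Finset.sum_congr rfl fun i _ => ?_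
      ring
    rw [hkey, Finset.sum_sub_distrib]
    ring
  have hrecf : e = γ • (Matrix.vecMul e M) + γ • b := by
    funext s; simpa using hrec s
  -- partial sum identity
  have hpart : ∀ n : ℕ, ∀ s, e s =
      (∑ k ∈ Finset.range n, γ ^ (k + 1) * Matrix.vecMul b (M ^ k) s)
        + γ ^ n * Matrix.vecMul e (M ^ n) s := by
    intro n
    induction n with
    | zero => intro s; simp [Matrix.vecMul_one]
    | succ n ih =>
        intro s
        have key : Matrix.vecMul e (M ^ n) s
            = γ * Matrix.vecMul e (M ^ (n + 1)) s + γ * Matrix.vecMul b (M ^ n) s := by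
          conv_lhs => rw [hrecf]
          rw [Matrix.add_vecMul, Matrix.smul_vecMul, Matrix.smul_vecMul,
            Matrix.vecMul_vecMul, ← pow_succ']
          simp [Pi.add_apply, Pi.smul_apply, smul_eq_mul]
        rw [ih s, key, Finset.sum_range_succ]
        ring
  -- e pointwise bound
  have hC : ∀ k s, |Matrix.vecMul e (M ^ k) s| ≤ ∑ i, |e i| :=
    fun k s => vecMul_abs_le T' hT'0 hT'1 k e s
  have hCb : ∀ k s, |Matrix.vecMul b (M ^ k) s| ≤ ∑ i, |b i| :=
    fun k s => vecMul_abs_le T' hT'0 hT'1 k b s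
  intro s
  -- summability
  have hsum : Summable (fun k : ℕ => γ ^ k * Matrix.vecMul b (M ^ k) s) := by
    have hg : Summable (fun k : ℕ => γ ^ k * ∑ i, |b i|) :=
      (summable_geometric_of_lt_one hγ0 hγ1).mul_right _
    refine Summable.of_abs (Summable.of_nonneg_of_le (fun k => abs_nonneg _) (fun k => ?_) hg)
    rw [abs_mul, abs_of_nonneg (pow_nonneg hγ0 k)]
    exact mul_le_mul_of_nonneg_left (hCb k s) (pow_nonneg hγ0 k)
  have hrem : Filter.Tendsto (fun n : ℕ => γ ^ n * Matrix.vecMul e (M ^ n) s)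
      Filter.atTop (nhds 0) := by
    have hg : Filter.Tendsto (fun n : ℕ => (∑ i, |e i|) * γ ^ n) Filter.atTop (nhds 0) := by
      have := (tendsto_pow_atTop_nhds_zero_of_lt_one hγ0 hγ1).const_mul (∑ i, |e i|)
      simpa using this
    apply squeeze_zero_norm _ hg
    intro n
    rw [Real.norm_eq_abs, abs_mul, abs_of_nonneg (pow_nonneg hγ0 n)]
    calc γ ^ n * |Matrix.vecMul e (M ^ n) s| ≤ γ ^ n * ∑ i, |e i| :=
          mul_le_mul_of_nonneg_left (hC n s) (pow_nonneg hγ0 n)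
      _ = (∑ i, |e i|) * γ ^ n := by ring
  have hsum' : Summable (fun k : ℕ => γ ^ (k + 1) * Matrix.vecMul b (M ^ k) s) := by
    have : (fun k : ℕ => γ ^ (k + 1) * Matrix.vecMul b (M ^ k) s)
        = fun k => γ * (γ ^ k * Matrix.vecMul b (M ^ k) s) := by
      funext k; ring
    rw [this]
    exact hsum.mul_left γ
  have htends1 : Filter.Tendsto
      (fun n : ℕ => ∑ k ∈ Finset.range n, γ ^ (k + 1) * Matrix.vecMul b (M ^ k) s)
      Filter.atTop (nhds (e s)) := by
    have heq : (fun n : ℕ => ∑ k ∈ Finset.range n, γ ^ (k + 1) * Matrix.vecMul b (M ^ k) s)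
        = fun n => e s - γ ^ n * Matrix.vecMul e (M ^ n) s := by
      funext n
      have := hpart n s
      linarith
    rw [heq]
    simpa using (tendsto_const_nhds (x := e s)).sub hrem
  have htends2 := hsum'.hasSum.tendsto_sum_nat
  have hes : e s = ∑' k : ℕ, γ ^ (k + 1) * Matrix.vecMul b (M ^ k) s :=
    tendsto_nhds_unique htends1 htends2
  have hfinal : e s = γ * ∑' k : ℕ, γ ^ k * Matrix.vecMul b (M ^ k) s := by
    rw [hes, ← tsum_mul_left]
    congr 1; funext k; ring
  rw [show d' s - d s = e s from rfl, hfinal]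
  congr 1
  apply tsum_congr
  intro k
  rw [iter_vecMul T' k b]
end
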